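/- arXiv:1401.1885 — 7 statements merged into one kernel-verified Lean document; each statement's English description precedes it below -/
import Mathlib

section
/- Let q be a primitive d-th root of unity in a field of characteristic 0 with d > 1, and let l, m be nonnegative integers. Then the Gaussian binomial coefficient binom(l+m, l)_q equals 0 if and only if ⌊(l+m)/d⌋ - ⌊m/d⌋ - ⌊l/d⌋ > 0. -/
/-- Gaussian binomial coefficient as a polynomial in q, via the q-Pascal rule:
binom(n+1, k+1)_q = binom(n,k)_q + q^(k+1) * binom(n, k+1)_q. -/
noncomputable def gbinom : ℕ → ℕ → Polynomial ℤ
  | _, 0 => 1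
  | 0, _ + 1 => 0
  | n + 1, k + 1 => gbinom n k + Polynomial.X ^ (k + 1) * gbinom n (k + 1)

open Polynomial Finset

noncomputable def qint (n : ℕ) : Polynomial ℤ := ∑ i ∈ Finset.range n, X ^ i

noncomputable def qfact (n : ℕ) : Polynomial ℤ := ∏ j ∈ Finset.range n, qint (j + 1)

lemma qint_add (a b : ℕ) : qint (a + b) = qint a + X ^ a * qint b := by
  simp only [qint, Finset.sum_range_add, Finset.mul_sum, pow_add]

lemma qfact_succ (n : ℕ) : qfact (n + 1) = qfact n * qint (n + 1) :=
  Finset.prod_range_succ _ _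

lemma gbinom_eq_zero : ∀ n k : ℕ, n < k → gbinom n k = 0
  | 0, _ + 1, _ => rfl
  | n + 1, k + 1, h => by
    rw [gbinom, gbinom_eq_zero n k (by omega), gbinom_eq_zero n (k + 1) (by omega)]
    ring

lemma gbinom_mul_qfact : ∀ n k : ℕ, k ≤ n →
    gbinom n k * qfact k * qfact (n - k) = qfact n
  | 0, 0, _ => by simp [gbinom, qfact]
  | n + 1, 0, _ => by simp [gbinom, qfact]
  | n + 1, k + 1, h => by
    rcases eq_or_lt_of_le h with h | h
    · -- k + 1 = n + 1
      obtain rfl : n = k := by omega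
      have h0 : gbinom n n * qfact n = qfact n := by
        simpa [qfact] using gbinom_mul_qfact n n le_rfl
      rw [gbinom, gbinom_eq_zero n (n + 1) (by omega), Nat.sub_self]
      simp only [qfact_succ, mul_zero, zero_mul, add_zero]
      have : qfact 0 = 1 := by simp [qfact]
      rw [this, mul_one, ← mul_assoc, h0]
    · have hk : k ≤ n := by omega
      have hk1 : k + 1 ≤ n := by omega
      have h1 := gbinom_mul_qfact n k hk
      have h2 := gbinom_mul_qfact n (k + 1) hk1
      have hsub : n - k = (n - (k + 1)) + 1 := by omega
      rw [gbinom, qfact_succ]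
      have e1 : n + 1 - (k + 1) = n - k := by omega
      rw [e1, hsub, qfact_succ (n - (k+1))]
      have key : qint (n + 1) = qint (k + 1) + X ^ (k + 1) * qint (n - (k + 1) + 1) := by
        rw [← qint_add]; congr 1; omega
      calc (gbinom n k + X ^ (k + 1) * gbinom n (k + 1)) * (qfact k * qint (k + 1)) *
            (qfact (n - (k + 1)) * qint (n - (k + 1) + 1))
          = (gbinom n k * qfact k * qfact (n - k)) * qint (k + 1)
            + X ^ (k + 1) * (gbinom n (k + 1) * qfact (k + 1) * qfact (n - (k + 1)))
              * qint (n - (k + 1) + 1) := by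
            rw [hsub, qfact_succ (n - (k+1)), qfact_succ k]; ring
        _ = qfact n * qint (n + 1) := by rw [h1, h2, key]; ring
        _ = qfact (n + 1) := (qfact_succ n).symm

/-- for q a primitive d-th root of unity (d > 1) in a field of
characteristic 0, the Gaussian binomial binom(l+m, l)_q vanishes iff
⌊(l+m)/d⌋ - ⌊m/d⌋ - ⌊l/d⌋ > 0. -/
theorem gaussBinom_eq_zero_iff {K : Type*} [Field K] [CharZero K]
    {q : K} {d : ℕ} (hd : 1 < d) (hq : IsPrimitiveRoot q d) (l m : ℕ) :
    Polynomial.aeval q (gbinom (l + m) l) = 0 ↔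
      (l + m) / d - m / d - l / d > 0 := by
  classical
  set φ := algebraMap ℤ K
  have hd0 : d ≠ 0 := by omega
  have hq1 : q ≠ 1 := hq.ne_one hd
  -- the key multiplication identity for qint
  have hgeom : ∀ j : ℕ, (qint j) * (X - C 1) = X ^ j - C 1 := by
    intro j
    simpa [qint] using geom_sum_mul (X : Polynomial ℤ) j
  have hXj : ∀ j : ℕ, 1 ≤ j → ((X : K[X]) ^ j - C 1) ≠ 0 := fun j hj =>
    X_pow_sub_C_ne_zero (by omega) 1
  -- root multiplicity of qint j at q
  have hrm_qint : ∀ j : ℕ, 1 ≤ j →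
      Polynomial.rootMultiplicity q ((qint j).map φ) = if d ∣ j then 1 else 0 := by
    intro j hj
    have hmapid : ((qint j).map φ) * (X - C 1) = X ^ j - C 1 := by
      have := congrArg (Polynomial.map φ) (hgeom j)
      simpa [Polynomial.map_mul, Polynomial.map_sub, Polynomial.map_pow] using this
    have hne : ((qint j).map φ) * (X - C 1) ≠ 0 := by
      rw [hmapid]; exact hXj j hj
    have hrm1 : Polynomial.rootMultiplicity q ((X : K[X]) - C 1) = 0 := by
      apply Polynomial.rootMultiplicity_eq_zero
      simp [Polynomial.IsRoot, sub_eq_zero, hq1]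
    have hadd := Polynomial.rootMultiplicity_mul (x := q) hne
    rw [hmapid, hrm1, add_zero] at hadd
    rw [← hadd]
    by_cases hdvd : d ∣ j
    · have hroot : Polynomial.IsRoot ((X : K[X]) ^ j - C 1) q := by
        simp only [Polynomial.IsRoot, Polynomial.eval_sub, Polynomial.eval_pow,
          Polynomial.eval_X, Polynomial.eval_C, sub_eq_zero]
        exact (hq.pow_eq_one_iff_dvd j).2 hdvd
      have hpos : 0 < Polynomial.rootMultiplicity q ((X : K[X]) ^ j - C 1) :=
        (Polynomial.rootMultiplicity_pos (hXj j hj)).2 hroot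
      have hsep : ((X : K[X]) ^ j - 1).Separable :=
        Polynomial.X_pow_sub_one_separable_iff.2 (by
          exact_mod_cast (Nat.cast_ne_zero (R := K)).2 (by omega))
      have hle : Polynomial.rootMultiplicity q ((X : K[X]) ^ j - C 1) ≤ 1 :=
        Polynomial.rootMultiplicity_le_one_of_separable (by simpa using hsep) q
      rw [if_pos hdvd]
      omega
    · rw [if_neg hdvd]
      apply Polynomial.rootMultiplicity_eq_zero
      simp only [Polynomial.IsRoot, Polynomial.eval_sub, Polynomial.eval_pow,
        Polynomial.eval_X, Polynomial.eval_C, sub_eq_zero]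
      exact fun h => hdvd ((hq.pow_eq_one_iff_dvd j).1 h)
  -- qint maps are nonzero
  have hqint_ne : ∀ j : ℕ, 1 ≤ j → ((qint j).map φ) ≠ 0 := by
    intro j hj
    have hmapid : ((qint j).map φ) * (X - C 1) = X ^ j - C 1 := by
      have := congrArg (Polynomial.map φ) (hgeom j)
      simpa [Polynomial.map_mul, Polynomial.map_sub, Polynomial.map_pow] using this
    intro h0
    exact hXj j hj (by rw [← hmapid, h0, zero_mul])
  -- qfact maps are nonzero and have root multiplicity n / d
  have hqfact : ∀ n : ℕ, ((qfact n).map φ) ≠ 0 ∧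
      Polynomial.rootMultiplicity q ((qfact n).map φ) = n / d := by
    intro n
    induction n with
    | zero => simp [qfact]
    | succ n ih =>
      have hmap : (qfact (n + 1)).map φ = (qfact n).map φ * (qint (n + 1)).map φ := by
        rw [qfact_succ, Polynomial.map_mul]
      have hne : (qfact (n + 1)).map φ ≠ 0 := by
        rw [hmap]; exact mul_ne_zero ih.1 (hqint_ne (n + 1) (by omega))
      refine ⟨hne, ?_⟩
      rw [hmap] at hne ⊢
      rw [Polynomial.rootMultiplicity_mul hne, ih.2, hrm_qint (n + 1) (by omega),
        Nat.succ_div]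
  -- the main identity, mapped to K
  have hid := congrArg (Polynomial.map φ) (gbinom_mul_qfact (l + m) l (by omega))
  rw [Nat.add_sub_cancel_left] at hid
  simp only [Polynomial.map_mul] at hid
  set G := (gbinom (l + m) l).map φ with hG
  have hGne : G ≠ 0 := by
    intro h0
    rw [h0, zero_mul, zero_mul] at hid
    exact (hqfact (l + m)).1 hid.symm
  have hprodne : G * (qfact l).map φ * (qfact m).map φ ≠ 0 := by
    rw [hid]; exact (hqfact (l + m)).1
  have hrmeq : Polynomial.rootMultiplicity q G + l / d + m / d = (l + m) / d := by
    have h1 := Polynomial.rootMultiplicity_mul (x := q) hprodne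
    have h2 := Polynomial.rootMultiplicity_mul (x := q)
      (mul_ne_zero hGne (hqfact l).1)
    rw [hid, (hqfact (l + m)).2] at h1
    rw [h2, (hqfact l).2, (hqfact m).2] at h1
    omega
  have heval : Polynomial.aeval q (gbinom (l + m) l) = Polynomial.eval q G := by
    rw [hG, Polynomial.eval_map, Polynomial.aeval_def]
  rw [heval]
  constructor
  · intro h
    have := (Polynomial.rootMultiplicity_pos hGne).2 h
    omega
  · intro h
    have hpos : 0 < Polynomial.rootMultiplicity q G := by omega
    exact (Polynomial.rootMultiplicity_pos hGne).1 hpos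
end

section
/- The set {x^i · f_k(x,y) : i ≥ 0, k ≥ 0} is a ℤ-basis of the polynomial ring ℤ[x,y]. -/
/-- Generalized Fibonacci polynomials in ℤ[x,y] (x = X 0, y = X 1):
f_0 = 1, f_1 = y, f_k = y·f_{k-1} - x·f_{k-2}. -/
noncomputable def f2 : ℕ → MvPolynomial (Fin 2) ℤ
  | 0 => 1
  | 1 => MvPolynomial.X 1
  | k + 2 => MvPolynomial.X 1 * f2 (k + 1) - MvPolynomial.X 0 * f2 k

/-!
Since `f_k = y^k + (terms of total degree < k)`, the family `x^i f_k` is unitriangular with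
respect to the monomial basis `x^i y^k` filtered by total degree. A unitriangular family is
again a basis: each monomial is recovered by induction on its degree, and the map sending
each basis vector to its family member is the identity plus a degree-lowering map, hence
injective.
-/

open Submodule Set

theorem LinearMap.injective_of_apply_sub_self_mem_pred {R M : Type*} [Ring R] [AddCommGroup M]
    [Module R M] {F : ℕ → Submodule R M} (hF0 : F 0 = ⊥) (hF : ∀ x, ∃ n, x ∈ F n)
    (f : M →ₗ[R] M) (hf : ∀ n, ∀ x ∈ F (n + 1), f x - x ∈ F n) : Function.Injective f := by
  have hzero : ∀ n, ∀ x ∈ F n, f x = 0 → x = 0 := by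
    intro n
    induction n with
    | zero => simp [hF0]
    | succ n ih =>
      intro x hx hfx
      refine ih x ?_ hfx
      simpa [hfx] using neg_mem (hf n x hx)
  rw [← LinearMap.ker_eq_bot, LinearMap.ker_eq_bot']
  intro x hx
  obtain ⟨n, hn⟩ := hF x
  exact hzero n x hn hx

namespace Module.Basis

variable {ι R M : Type*} [Ring R] [AddCommGroup M] [Module R M]
  (b : Basis ι R M) (deg : ι → ℕ) {v : ι → M}

theorem exists_mem_span_image_lt (x : M) : ∃ n, x ∈ span R (b '' {j | deg j < n}) :=
  ⟨(b.repr x).support.sup deg + 1,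
    span_mono (image_mono fun _ hj => Nat.lt_succ_of_le (Finset.le_sup hj))
      (b.mem_span_repr_support x)⟩

theorem span_range_eq_top_of_sub_mem_span_lt
    (hv : ∀ i, v i - b i ∈ span R (b '' {j | deg j < deg i})) : span R (range v) = ⊤ := by
  have hb : ∀ n, ∀ i, deg i = n → b i ∈ span R (range v) := by
    intro n
    induction n using Nat.strong_induction_on with
    | _ n ih =>
      rintro i rfl
      have hlower : span R (b '' {j | deg j < deg i}) ≤ span R (range v) :=
        span_le.2 (by rintro _ ⟨j, hj, rfl⟩; exact ih _ hj j rfl)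
      simpa using sub_mem (subset_span (mem_range_self i)) (hlower (hv i))
  rw [eq_top_iff, ← b.span_eq, span_le]
  rintro _ ⟨i, rfl⟩
  exact hb _ i rfl

theorem linearIndependent_of_sub_mem_span_lt
    (hv : ∀ i, v i - b i ∈ span R (b '' {j | deg j < deg i})) : LinearIndependent R v := by
  set g : M →ₗ[R] M := Finsupp.linearCombination R v ∘ₗ b.repr
  have hgb : ∀ i, g (b i) = v i := by simp [g]
  have hg : Function.Injective g := by
    refine LinearMap.injective_of_apply_sub_self_mem_pred
      (F := fun n => span R (b '' {j | deg j < n})) (by simp) (b.exists_mem_span_image_lt deg) g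
      fun n => ?_
    suffices span R (b '' {j | deg j < n + 1}) ≤
        (span R (b '' {j | deg j < n})).comap (g - .id) from fun x hx => this hx
    refine span_le.2 ?_
    rintro _ ⟨i, hi, rfl⟩
    have hlower : span R (b '' {j | deg j < deg i}) ≤ span R (b '' {j | deg j < n}) :=
      span_mono (image_mono fun j hj => lt_of_lt_of_le hj (Nat.lt_succ_iff.1 hi))
    simpa [hgb] using hlower (hv i)
  simpa [Function.comp_def, hgb] using b.linearIndependent.map' g (LinearMap.ker_eq_bot.2 hg)

end Module.Basis

namespace MvPolynomial

variable {σ R : Type*} [CommSemiring R]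

theorem X_pow_mem_restrictSupport_degree_lt (s : σ) {m : ℕ} :
    (X s ^ m : MvPolynomial σ R) ∈ restrictSupport R {d | d.degree < m + 1} := by
  rw [X_pow_eq_monomial, monomial_mem_restrictSupport]
  left
  simp

theorem X_pow_mul_mem_restrictSupport_degree_lt (s : σ) (m : ℕ) {n : ℕ} {p : MvPolynomial σ R}
    (hp : p ∈ restrictSupport R {d | d.degree < n}) :
    X s ^ m * p ∈ restrictSupport R {d | d.degree < n + m} := by
  have hmul := Submodule.mul_mem_mul
    ((monomial_mem_restrictSupport R (r := 1)).2 (Or.inl (mem_singleton (Finsupp.single s m)))) hp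
  rw [← restrictSupport_add, ← X_pow_eq_monomial] at hmul
  refine restrictSupport_mono R ?_ hmul
  rintro _ ⟨_, rfl, d, hd, rfl⟩
  simp only [mem_ofPred_eq, map_add, Finsupp.degree_single] at hd ⊢
  omega

end MvPolynomial

open MvPolynomial

theorem f2_sub_X_pow_mem_restrictSupport (k : ℕ) :
    f2 k - X 1 ^ k ∈ restrictSupport ℤ {d | d.degree < k} := by
  induction k using f2.induct with
  | case1 => simp [f2]
  | case2 => simp [f2]
  | case3 k ih_succ ih =>
    have hf2 : f2 k ∈ restrictSupport ℤ {d | d.degree < k + 1} := by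
      rw [← sub_add_cancel (f2 k) (X 1 ^ k)]
      exact add_mem (restrictSupport_mono ℤ (fun _ => Nat.lt_succ_of_lt) ih)
        (X_pow_mem_restrictSupport_degree_lt 1)
    have hrec : f2 (k + 2) - X 1 ^ (k + 2) =
        X 1 ^ 1 * (f2 (k + 1) - X 1 ^ (k + 1)) - X 0 ^ 1 * f2 k := by
      rw [f2]
      ring
    rw [hrec]
    exact sub_mem (X_pow_mul_mem_restrictSupport_degree_lt 1 1 ih_succ)
      (X_pow_mul_mem_restrictSupport_degree_lt 0 1 hf2)

theorem X_zero_pow_mul_f2_sub_monomial_mem_restrictSupport (d : Fin 2 →₀ ℕ) :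
    X 0 ^ d 0 * f2 (d 1) - monomial d 1 ∈ restrictSupport ℤ {j | j.degree < d.degree} := by
  have hmono : (monomial d 1 : MvPolynomial (Fin 2) ℤ) = X 0 ^ d 0 * X 1 ^ d 1 := by
    simp [monomial_eq, Finsupp.prod_fintype, Fin.prod_univ_two]
  have hdeg : d.degree = d 1 + d 0 := by
    rw [Finsupp.degree_eq_sum, Fin.sum_univ_two, add_comm]
  rw [hmono, ← mul_sub, hdeg]
  exact X_pow_mul_mem_restrictSupport_degree_lt 0 (d 0) (f2_sub_X_pow_mem_restrictSupport (d 1))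

open MvPolynomial in
/-- {x^i f_k(x,y) : i, k ≥ 0} is a ℤ-basis of ℤ[x,y]. -/
theorem f2_family_basis :
    LinearIndependent ℤ (fun p : ℕ × ℕ => (X 0 : MvPolynomial (Fin 2) ℤ) ^ p.1 * f2 p.2) ∧
    Submodule.span ℤ
      (Set.range (fun p : ℕ × ℕ => (X 0 : MvPolynomial (Fin 2) ℤ) ^ p.1 * f2 p.2)) = ⊤ := by
  set v : (Fin 2 →₀ ℕ) → MvPolynomial (Fin 2) ℤ := fun d => X 0 ^ d 0 * f2 (d 1)
  have hv : ∀ d, v d - basisMonomials (Fin 2) ℤ d ∈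
      span ℤ (basisMonomials (Fin 2) ℤ '' {j | j.degree < d.degree}) := fun d => by
    rw [coe_basisMonomials, ← restrictSupport_eq_span]
    exact X_zero_pow_mul_f2_sub_monomial_mem_restrictSupport d
  have hfamily : (fun p : ℕ × ℕ => X 0 ^ p.1 * f2 p.2) = v ∘ (finTwoArrowEquiv' ℕ).symm := by
    ext p
    simp [v]
  rw [hfamily, EquivLike.range_comp, linearIndependent_equiv]
  exact ⟨(basisMonomials (Fin 2) ℤ).linearIndependent_of_sub_mem_span_lt _ hv,
    (basisMonomials (Fin 2) ℤ).span_range_eq_top_of_sub_mem_span_lt _ hv⟩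
end

section
/- The images of the elements x^i · f_k(x,y) for 0 ≤ i ≤ n-1 and k ≥ 0 form a ℤ-basis of the quotient ring ℤ[x,y]/⟨x^n - 1⟩. -/
/-!
For a monic `p`, sending `x` to the root of `p` identifies `ℤ[x,y]/(p(x))` with `R[y]`, where
`R = ℤ[x]/(p)` is free over `ℤ` on `1, x, …, x^(deg p - 1)`. Under this isomorphism `f_k` becomes
a monic polynomial of degree `k` in `y`, so the `f_k` form an `R`-basis of `R[y]`, and the products
`x^i f_k` form a `ℤ`-basis by the tower law for bases.
-/

open Polynomial

section QuotientEquiv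

variable {R : Type*} [CommRing R] (p : R[X])

local notation "Q" => MvPolynomial (Fin 2) R ⧸ Ideal.span {aeval (MvPolynomial.X 0 : MvPolynomial (Fin 2) R) p}

noncomputable def toPolynomialAdjoinRoot : Q →ₐ[R] (AdjoinRoot p)[X] :=
  Ideal.Quotient.liftₐ _ (MvPolynomial.aeval ![C (AdjoinRoot.root p), X]) fun a ha => by
    obtain ⟨c, rfl⟩ := Ideal.mem_span_singleton'.mp ha
    rw [map_mul, ← aeval_algHom_apply, MvPolynomial.aeval_X, Matrix.cons_val_zero,
      ← algebraMap_eq (R := AdjoinRoot p), aeval_algebraMap_apply, AdjoinRoot.aeval_eq,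
      AdjoinRoot.mk_self, map_zero, mul_zero]

@[simp]
theorem toPolynomialAdjoinRoot_mk (q : MvPolynomial (Fin 2) R) :
    toPolynomialAdjoinRoot p (Ideal.Quotient.mk _ q) =
      MvPolynomial.aeval ![C (AdjoinRoot.root p), X] q :=
  rfl

noncomputable def ofPolynomialAdjoinRoot : (AdjoinRoot p)[X] →ₐ[R] Q :=
  eval₂AlgHom
    (AdjoinRoot.liftAlgHom p (Algebra.ofId R _) (Ideal.Quotient.mk _ (MvPolynomial.X 0)) (by
      change aeval (Ideal.Quotient.mkₐ R _ (MvPolynomial.X 0)) p = 0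
      rw [aeval_algHom_apply, Ideal.Quotient.mkₐ_eq_mk, Ideal.Quotient.eq_zero_iff_mem]
      exact Ideal.subset_span rfl))
    (Ideal.Quotient.mk _ (MvPolynomial.X 1)) fun _ => Commute.all _ _

noncomputable def quotientEquivPolynomialAdjoinRoot : Q ≃ₐ[R] (AdjoinRoot p)[X] :=
  AlgEquiv.ofAlgHom (toPolynomialAdjoinRoot p) (ofPolynomialAdjoinRoot p)
    (Polynomial.algHom_ext' (AdjoinRoot.algHom_ext (by simp [ofPolynomialAdjoinRoot]))
      (by simp [ofPolynomialAdjoinRoot]))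
    (Ideal.Quotient.algHom_ext _ (MvPolynomial.algHom_ext fun i => by
      fin_cases i <;> simp [ofPolynomialAdjoinRoot]))

end QuotientEquiv

namespace Polynomial.Sequence

variable {R : Type*} [Ring R] (S : Sequence R)

-- Unlike `Sequence.linearIndependent`, this needs no `IsDomain R`: in a relation `∑ g j • S j = 0`,
-- the coefficient of degree `m = max {j | g j ≠ 0}` is `g m` itself.
theorem linearIndependent_of_monic (hS : ∀ i, (S i).Monic) : LinearIndependent R S := by
  classical
  rw [linearIndependent_iff']
  intro s g hsum i hi
  by_contra hgi
  set t := s.filter (g · ≠ 0)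
  have ht : t.Nonempty := ⟨i, Finset.mem_filter.mpr ⟨hi, hgi⟩⟩
  set m := t.max' ht
  have hm : m ∈ t := t.max'_mem ht
  have hcoeff : (∑ j ∈ s, g j • S j).coeff m = g m := by
    rw [finsetSum_coeff, Finset.sum_eq_single m]
    · have hlead : (S m).coeff m = 1 := by simpa using (hS m).coeff_natDegree
      rw [coeff_smul, hlead, smul_eq_mul, mul_one]
    · intro j hj hjm
      rcases hjm.lt_or_gt with hlt | hgt
      · rw [coeff_smul, coeff_eq_zero_of_natDegree_lt (by simpa using hlt), smul_zero]
      · have hgj : g j = 0 := by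
          by_contra hgj
          exact (t.le_max' j (Finset.mem_filter.mpr ⟨hj, hgj⟩)).not_gt hgt
        rw [hgj, zero_smul, coeff_zero]
    · exact fun hms => absurd (Finset.mem_filter.mp hm).1 hms
  exact (Finset.mem_filter.mp hm).2 (by rw [← hcoeff, hsum, coeff_zero])

noncomputable def basisOfMonic (hS : ∀ i, (S i).Monic) : Module.Basis ℕ R R[X] :=
  Module.Basis.mk (S.linearIndependent_of_monic hS)
    (S.span fun i => (hS i).leadingCoeff ▸ isUnit_one).ge

@[simp]
theorem basisOfMonic_apply (hS : ∀ i, (S i).Monic) (i : ℕ) : S.basisOfMonic hS i = S i :=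
  Module.Basis.mk_apply _ _ _

end Polynomial.Sequence

section FibonacciSequence

variable {A : Type*} [CommRing A] [Nontrivial A] (a : A)

theorem monic_and_natDegree_aeval_f2 :
    ∀ k, (MvPolynomial.aeval ![C a, X] (f2 k)).Monic ∧
      (MvPolynomial.aeval ![C a, X] (f2 k)).natDegree = k
  | 0 => by simp [f2]
  | 1 => by simp [f2]
  | k + 2 => by
    obtain ⟨hm₁, hd₁⟩ := monic_and_natDegree_aeval_f2 (k + 1)
    obtain ⟨-, hd₀⟩ := monic_and_natDegree_aeval_f2 k
    have hlead : (X * MvPolynomial.aeval ![C a, X] (f2 (k + 1))).natDegree = k + 2 := by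
      rw [natDegree_X_mul hm₁.ne_zero, hd₁]
    have htail : (C a * MvPolynomial.aeval ![C a, X] (f2 k)).natDegree <
        (X * MvPolynomial.aeval ![C a, X] (f2 (k + 1))).natDegree :=
      hlead ▸ (natDegree_C_mul_le _ _).trans_lt (by omega)
    simp only [f2, map_sub, map_mul, MvPolynomial.aeval_X, Matrix.cons_val_zero,
      Matrix.cons_val_one]
    exact ⟨(monic_X.mul hm₁).sub_of_left (degree_lt_degree htail),
      by rw [natDegree_sub_eq_left_of_natDegree_lt htail, hlead]⟩

noncomputable def f2Sequence : Polynomial.Sequence A where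
  elems' k := MvPolynomial.aeval ![C a, X] (f2 k)
  degree_eq' k := by
    obtain ⟨hm, hd⟩ := monic_and_natDegree_aeval_f2 a k
    rw [degree_eq_natDegree hm.ne_zero, hd]

theorem f2Sequence_monic (k : ℕ) : (f2Sequence a k).Monic :=
  (monic_and_natDegree_aeval_f2 a k).1

end FibonacciSequence

section QuotientBasis

variable {p : ℤ[X]} (hp : p.Monic) (hdeg : p.degree ≠ 0)

noncomputable def f2QuotientBasis : Module.Basis (Fin p.natDegree × ℕ) ℤ
    (MvPolynomial (Fin 2) ℤ ⧸ Ideal.span {aeval (MvPolynomial.X 0 : MvPolynomial (Fin 2) ℤ) p}) :=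
  haveI := AdjoinRoot.nontrivial p hdeg
  ((AdjoinRoot.powerBasis' hp).basis.smulTower
    ((f2Sequence (AdjoinRoot.root p)).basisOfMonic (f2Sequence_monic _))).map
    (quotientEquivPolynomialAdjoinRoot p).symm.toLinearEquiv

theorem f2QuotientBasis_apply (ik : Fin p.natDegree × ℕ) :
    f2QuotientBasis hp hdeg ik = Ideal.Quotient.mk _ (MvPolynomial.X 0 ^ (ik.1 : ℕ) * f2 ik.2) := by
  refine (Module.Basis.map_apply _ _ _).trans
    ((quotientEquivPolynomialAdjoinRoot p).symm_apply_eq.mpr ?_)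
  refine (Module.Basis.smulTower_apply _ _ _).trans ?_
  simp only [PowerBasis.coe_basis, AdjoinRoot.powerBasis'_gen, Sequence.basisOfMonic_apply,
    smul_eq_C_mul, map_pow, map_mul, quotientEquivPolynomialAdjoinRoot, AlgEquiv.ofAlgHom_apply,
    toPolynomialAdjoinRoot_mk, MvPolynomial.aeval_X, Matrix.cons_val_zero]
  -- the two sides differ only in the semiring instance on `(AdjoinRoot p)[X]`
  rfl

end QuotientBasis

open MvPolynomial in
/-- the images of x^i f_k(x,y), 0 ≤ i ≤ n-1, k ≥ 0, form a
ℤ-basis of ℤ[x,y]/⟨x^n - 1⟩. -/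
theorem f2_family_basis_quotient (n : ℕ) (hn : 1 ≤ n) :
    LinearIndependent ℤ (fun p : Fin n × ℕ =>
      Ideal.Quotient.mk (Ideal.span {(X 0 : MvPolynomial (Fin 2) ℤ) ^ n - 1})
        (X 0 ^ (p.1 : ℕ) * f2 p.2)) ∧
    Submodule.span ℤ (Set.range (fun p : Fin n × ℕ =>
      Ideal.Quotient.mk (Ideal.span {(X 0 : MvPolynomial (Fin 2) ℤ) ^ n - 1})
        (X 0 ^ (p.1 : ℕ) * f2 p.2))) = ⊤ := by
  have hp : (Polynomial.X ^ n - 1 : ℤ[X]).Monic := by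
    simpa using monic_X_pow_sub_C (1 : ℤ) (by omega : n ≠ 0)
  have hdeg : (Polynomial.X ^ n - 1 : ℤ[X]).degree ≠ 0 := by
    rw [← Polynomial.C_1, degree_X_pow_sub_C (by omega)]
    exact_mod_cast (by omega : n ≠ 0)
  have hI : (X 0 : MvPolynomial (Fin 2) ℤ) ^ n - 1 =
      Polynomial.aeval (X 0) (Polynomial.X ^ n - 1 : ℤ[X]) := by
    simp
  let B := (f2QuotientBasis hp hdeg).reindex
    ((finCongr (by rw [← Polynomial.C_1, natDegree_X_pow_sub_C])).prodCongr (Equiv.refl ℕ))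
  have hB : ⇑B = fun ik : Fin n × ℕ => Ideal.Quotient.mk _ (X 0 ^ (ik.1 : ℕ) * f2 ik.2) := by
    ext ik
    simp [B, f2QuotientBasis_apply]
  rw [hI, ← hB]
  exact ⟨B.linearIndependent, B.span_eq⟩
end

section
/- The set {x^i · f_k(x,y) : i ∈ ℤ, k ≥ 0} is a ℤ-basis of the Laurent polynomial ring ℤ[x, x^{-1}, y]. -/
/-- The Laurent polynomial ring ℤ[x,x⁻¹,y], realised as polynomials in y over
Laurent polynomials in x. -/
abbrev LPoly : Type := Polynomial (LaurentPolynomial ℤ)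

/-- The image of f_k(x,y) in ℤ[x,x⁻¹,y] (x ↦ C (T 1), y ↦ X). -/
noncomputable def f2L (k : ℕ) : LPoly :=
  MvPolynomial.aeval ![Polynomial.C (LaurentPolynomial.T 1), Polynomial.X] (f2 k)

/-!
Over `A = ℤ[x, x⁻¹]`, the recurrence `f_{k+2} = y f_{k+1} - x f_k` makes `f_k` a monic polynomial
of degree `k` in `y`, so `(f_k)_k` is an `A`-basis of `A[y]`.
Multiplying it with the `ℤ`-basis `(x^i)_{i ∈ ℤ}` of `A` gives the `ℤ`-basis `(x^i f_k)_{i,k}`.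
-/

open Polynomial
open LaurentPolynomial (T)

theorem Polynomial.monic_and_degree_eq_of_recurrence {R : Type*} [Ring R] [Nontrivial R]
    {p : ℕ → R[X]} (c : R) (h0 : p 0 = 1) (h1 : p 1 = X)
    (hrec : ∀ k, p (k + 2) = X * p (k + 1) - C c * p k) (k : ℕ) :
    (p k).Monic ∧ (p k).degree = k := by
  induction k using Nat.twoStepInduction with
  | zero => simp [h0]
  | one => simp [h1, monic_X]
  | more k ih ih' =>
    have hlead : (X * p (k + 1)).degree = ↑(k + 2) := by
      rw [(commute_X _).eq, degree_mul_X, ih'.2]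
      norm_cast
    have htail : (C c * p k).degree < (X * p (k + 1)).degree := by
      rw [hlead]
      calc (C c * p k).degree ≤ 0 + k := degree_mul_le_of_le degree_C_le ih.2.le
        _ < ↑(k + 2) := by norm_cast; omega
    rw [hrec]
    exact ⟨(monic_X.mul ih'.1).sub_of_left htail,
      by rw [degree_sub_eq_left_of_degree_lt htail, hlead]⟩

theorem f2L_add_two (k : ℕ) : f2L (k + 2) = X * f2L (k + 1) - C (T 1) * f2L k := by
  simp [f2L, f2]

theorem f2L_monic_and_degree_eq (k : ℕ) : (f2L k).Monic ∧ (f2L k).degree = k :=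
  monic_and_degree_eq_of_recurrence (T 1) (by simp [f2L, f2]) (by simp [f2L, f2]) f2L_add_two k

noncomputable def f2LSequence : Polynomial.Sequence (LaurentPolynomial ℤ) where
  elems' := f2L
  degree_eq' k := (f2L_monic_and_degree_eq k).2

noncomputable def f2LBasis : Module.Basis ℕ (LaurentPolynomial ℤ) LPoly :=
  f2LSequence.basis fun k => (f2L_monic_and_degree_eq k).1.leadingCoeff ▸ isUnit_one

/-- {x^i f_k(x,y) : i ∈ ℤ, k ≥ 0} is a ℤ-basis of ℤ[x,x⁻¹,y]. -/
theorem f2_family_basis_laurent :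
    LinearIndependent ℤ
      (fun p : ℤ × ℕ => Polynomial.C (LaurentPolynomial.T (R := ℤ) p.1) * f2L p.2) ∧
    Submodule.span ℤ
      (Set.range (fun p : ℤ × ℕ =>
        Polynomial.C (LaurentPolynomial.T (R := ℤ) p.1) * f2L p.2)) = ⊤ := by
  let b : Module.Basis (ℤ × ℕ) ℤ LPoly := (AddMonoidAlgebra.basis ℤ ℤ).smulTower f2LBasis
  have hb : ⇑b = fun p : ℤ × ℕ => C (T p.1) * f2L p.2 := by
    ext1 p
    simp [b, f2LBasis, f2LSequence, Module.Basis.smulTower_apply, smul_eq_C_mul]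
  exact hb ▸ ⟨b.linearIndependent, b.span_eq⟩
end

section
/- Let A = ℤ[x,y]/⟨x^n - 1⟩. Then A is a free ℤ-module, and the free commutative ring on the classes of indecomposables {V(i,l) : i ∈ ℤ/n, l ≥ 0} with multiplication [V(i,l)]·[V(j,m)] determined by the rules [V(1,0)]·[V(i,l)] = [V(i+1,l)], [V(1,0)]^n = [V(0,0)] = 1, and [V(0,1)]·[V(0,l)] = [V(0,l+1)] + [V(1,l-1)] for l ≥ 1, is isomorphic to A via x ↦ [V(1,0)], y ↦ [V(0,1)]; under this isomorphism [V(i,k)] corresponds to x^i f_k(x,y). -/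
/-!
Sending `x` to the generator of the group ring `ℤ[ℤ/n]` identifies `ℤ[x,y]/⟨x^n - 1⟩` with the
polynomial ring `ℤ[ℤ/n][y]`, and turns `f_k(x,y)` into the Dickson polynomial of the second kind
`E_k(y)` with parameter `x`. Being monic of degree `k`, the `E_k` form a `ℤ[ℤ/n]`-basis of
`ℤ[ℤ/n][y]`, so the `x^i f_k` form a `ℤ`-basis of the quotient. The three-term recursion gives
`E_l E_m = ∑_{t ≤ min l m} x^t E_{l+m-2t}`, which is the Clebsch–Gordan rule of the Green ring.
-/

namespace Polynomial

open Finset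

section MonicBasis

variable {R : Type*} [CommRing R] {p : ℕ → R[X]}

theorem linearIndependent_of_monic_of_natDegree_eq (hmonic : ∀ k, (p k).Monic)
    (hdeg : ∀ k, (p k).natDegree = k) : LinearIndependent R p := by
  rw [linearIndependent_iff]
  intro c hc
  by_contra hne
  have hsupp : c.support.Nonempty := Finsupp.support_nonempty_iff.mpr hne
  set K := c.support.max' hsupp
  have hK : K ∈ c.support := c.support.max'_mem hsupp
  -- the top coefficient of the combination only sees the summand of highest degree
  have hcoeff : (Finsupp.linearCombination R p c).coeff K = c K := by
    rw [Finsupp.linearCombination_apply, Finsupp.sum, finsetSum_coeff,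
      sum_eq_single_of_mem K hK]
    · have hlead := (hmonic K).coeff_natDegree
      rw [hdeg] at hlead
      rw [coeff_smul, hlead, smul_eq_mul, mul_one]
    · intro k hk hkK
      have hlt : (p k).natDegree < K := by
        rw [hdeg]; exact lt_of_le_of_ne (c.support.le_max' k hk) hkK
      rw [coeff_smul, coeff_eq_zero_of_natDegree_lt hlt, smul_zero]
  rw [hc, coeff_zero] at hcoeff
  exact Finsupp.mem_support_iff.mp hK hcoeff.symm

theorem span_range_eq_top_of_monic_of_natDegree_eq (hmonic : ∀ k, (p k).Monic)
    (hdeg : ∀ k, (p k).natDegree = k) : Submodule.span R (Set.range p) = ⊤ := by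
  nontriviality R
  let S : Sequence R := ⟨p, fun k => by rw [degree_eq_natDegree (hmonic k).ne_zero, hdeg]⟩
  exact S.span fun k => (hmonic k).leadingCoeff ▸ isUnit_one

noncomputable def basisOfMonic (hmonic : ∀ k, (p k).Monic) (hdeg : ∀ k, (p k).natDegree = k) :
    Module.Basis ℕ R R[X] :=
  .mk (linearIndependent_of_monic_of_natDegree_eq hmonic hdeg)
    (span_range_eq_top_of_monic_of_natDegree_eq hmonic hdeg).ge

@[simp]
theorem basisOfMonic_apply (hmonic : ∀ k, (p k).Monic) (hdeg : ∀ k, (p k).natDegree = k)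
    (k : ℕ) : basisOfMonic hmonic hdeg k = p k :=
  Module.Basis.mk_apply _ _ _

end MonicBasis

section DicksonTwo

variable {R : Type*} [CommRing R] (a : R)

theorem dickson_two_zero_eq_one : dickson 2 a 0 = 1 := by
  rw [dickson_zero]; norm_num

theorem X_mul_dickson_two (k : ℕ) :
    X * dickson 2 a (k + 1) = dickson 2 a (k + 2) + C a * dickson 2 a k := by
  rw [dickson_add_two]; ring

theorem monic_dickson_two_and_natDegree [Nontrivial R] :
    ∀ k, (dickson 2 a k).Monic ∧ (dickson 2 a k).natDegree = k
  | 0 => by rw [dickson_two_zero_eq_one]; exact ⟨monic_one, natDegree_one⟩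
  | 1 => by rw [dickson_one]; exact ⟨monic_X, natDegree_X⟩
  | k + 2 => by
    obtain ⟨hmonic₁, hdeg₁⟩ := monic_dickson_two_and_natDegree (k + 1)
    have hdeg₀ := (monic_dickson_two_and_natDegree k).2
    have hlead : (X * dickson 2 a (k + 1)).natDegree = k + 2 := by
      rw [natDegree_X_mul hmonic₁.ne_zero, hdeg₁]
    have hlower : (C a * dickson 2 a k).natDegree < (X * dickson 2 a (k + 1)).natDegree := by
      rw [hlead]
      exact natDegree_C_mul_le a _ |>.trans_lt (by omega)
    rw [dickson_add_two]
    exact ⟨(monic_X.mul hmonic₁).sub_of_left (degree_lt_degree hlower),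
      by rw [natDegree_sub_eq_left_of_natDegree_lt hlower, hlead]⟩

theorem dickson_two_mul_of_le {l : ℕ} : ∀ {m : ℕ}, m ≤ l →
    dickson 2 a l * dickson 2 a m =
      ∑ t ∈ range (m + 1), C a ^ t * dickson 2 a (l + m - 2 * t)
  | 0, _ => by rw [dickson_two_zero_eq_one]; simp
  | 1, hl => by
    obtain ⟨l, rfl⟩ := Nat.exists_eq_add_of_le' hl
    rw [dickson_one, mul_comm, X_mul_dickson_two, sum_range_succ, sum_range_one,
      show l + 1 + 1 - 2 * 0 = l + 2 by omega, show l + 1 + 1 - 2 * 1 = l by omega]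
    ring
  | m + 2, hl => by
    have hstep : ∀ t ∈ range (m + 2), X * (C a ^ t * dickson 2 a (l + (m + 1) - 2 * t)) =
        C a ^ t * dickson 2 a (l + (m + 2) - 2 * t) +
          C a * (C a ^ t * dickson 2 a (l + m - 2 * t)) := by
      intro t ht
      have ht : t ≤ m + 1 := Nat.lt_succ_iff.mp (mem_range.mp ht)
      obtain ⟨j, hj⟩ : ∃ j, l + m - 2 * t = j := ⟨_, rfl⟩
      rw [show l + (m + 1) - 2 * t = j + 1 by omega, show l + (m + 2) - 2 * t = j + 2 by omega,
        hj, mul_left_comm, X_mul_dickson_two]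
      ring
    rw [dickson_add_two, mul_sub, mul_left_comm, dickson_two_mul_of_le (by omega : m + 1 ≤ l),
      mul_left_comm, dickson_two_mul_of_le (by omega : m ≤ l), mul_sum, mul_sum,
      sum_congr rfl hstep, sum_add_distrib,
      sum_range_succ (fun t => C a * (C a ^ t * dickson 2 a (l + m - 2 * t))) (m + 1),
      sum_range_succ (fun t => C a ^ t * dickson 2 a (l + (m + 2) - 2 * t)) (m + 2),
      show l + m - 2 * (m + 1) = l + (m + 2) - 2 * (m + 2) by omega]
    ring

theorem dickson_two_mul (l m : ℕ) :
    dickson 2 a l * dickson 2 a m =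
      ∑ t ∈ range (min l m + 1), C a ^ t * dickson 2 a (l + m - 2 * t) := by
  rcases le_total m l with h | h
  · rw [min_eq_right h, dickson_two_mul_of_le a h]
  · rw [min_eq_left h, mul_comm, add_comm l m, dickson_two_mul_of_le a h]

end DicksonTwo

end Polynomial

section PowZMod

variable {M : Type*} [Monoid M] {n : ℕ} [NeZero n]

def powZModHom (x : M) (hx : x ^ n = 1) : Multiplicative (ZMod n) →* M where
  toFun i := x ^ i.toAdd.val
  map_one' := by simp
  map_mul' i j := by
    rw [toAdd_mul, ZMod.val_add, ← pow_eq_pow_mod _ hx, pow_add]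

theorem powZModHom_ofAdd_natCast (x : M) (hx : x ^ n = 1) (k : ℕ) :
    powZModHom x hx (.ofAdd (k : ZMod n)) = x ^ k := by
  simp only [powZModHom, MonoidHom.coe_mk, OneHom.coe_mk, toAdd_ofAdd, ZMod.val_natCast]
  exact (pow_eq_pow_mod k hx).symm

end PowZMod

namespace CyclicQuiver

open Polynomial AddMonoidAlgebra Finset

variable (R : Type*) [CommRing R] (n : ℕ)

abbrev QuotRing :=
  MvPolynomial (Fin 2) R ⧸ Ideal.span {(MvPolynomial.X 0 : MvPolynomial (Fin 2) R) ^ n - 1}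

noncomputable def toPolynomial : QuotRing R n →ₐ[R] (AddMonoidAlgebra R (ZMod n))[X] :=
  Ideal.Quotient.liftₐ _ (MvPolynomial.aeval ![C (single 1 1), X]) fun p hp => by
    obtain ⟨q, rfl⟩ := Ideal.mem_span_singleton'.mp hp
    simp [← C_pow, single_pow, ← one_def]

@[simp]
theorem toPolynomial_mk_X_zero :
    toPolynomial R n (Ideal.Quotient.mk _ (MvPolynomial.X 0)) = C (single 1 1) :=
  MvPolynomial.aeval_X _ 0

@[simp]
theorem toPolynomial_mk_X_one : toPolynomial R n (Ideal.Quotient.mk _ (MvPolynomial.X 1)) = X :=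
  MvPolynomial.aeval_X _ 1

theorem mk_X_zero_pow :
    (Ideal.Quotient.mk _ (MvPolynomial.X 0) : QuotRing R n) ^ n = 1 := by
  rw [← map_pow, ← map_one (Ideal.Quotient.mk _), Ideal.Quotient.eq]
  exact Ideal.subset_span rfl

theorem toPolynomial_mk_f2 : ∀ k, toPolynomial ℤ n (Ideal.Quotient.mk _ (f2 k)) =
    dickson 2 (single 1 1 : AddMonoidAlgebra ℤ (ZMod n)) k
  | 0 => by rw [dickson_two_zero_eq_one, f2, map_one, map_one]
  | 1 => by simp [f2]
  | k + 2 => by simp [f2, dickson_add_two, toPolynomial_mk_f2 k, toPolynomial_mk_f2 (k + 1)]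

section Basis

variable [Nontrivial R]

-- `greenBasis R n (i, k)` is the image of `x^i f_k(x,y)`, i.e. the class `[V(i,k)]`.
noncomputable def greenBasis : Module.Basis (ZMod n × ℕ) R (AddMonoidAlgebra R (ZMod n))[X] :=
  (AddMonoidAlgebra.basis (ZMod n) R).smulTower <| basisOfMonic
    (fun k => (monic_dickson_two_and_natDegree (single 1 1 : AddMonoidAlgebra R (ZMod n)) k).1)
    (fun k => (monic_dickson_two_and_natDegree (single 1 1 : AddMonoidAlgebra R (ZMod n)) k).2)

theorem greenBasis_apply (i : ZMod n) (k : ℕ) :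
    greenBasis R n (i, k) =
      C (single i 1) * dickson 2 (single 1 1 : AddMonoidAlgebra R (ZMod n)) k := by
  simp [greenBasis, smul_eq_C_mul]

theorem greenBasis_mul (i j : ZMod n) (l m : ℕ) :
    greenBasis R n (i, l) * greenBasis R n (j, m) =
      ∑ t ∈ range (min l m + 1), greenBasis R n (i + j + t, l + m - 2 * t) := by
  simp only [greenBasis_apply]
  rw [mul_mul_mul_comm, ← C_mul, single_mul_single, one_mul, dickson_two_mul, mul_sum]
  refine sum_congr rfl fun t _ => ?_
  rw [← mul_assoc, ← C_pow, ← C_mul, single_pow, single_mul_single]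
  simp

end Basis

variable [NeZero n]

noncomputable def ofPolynomial : (AddMonoidAlgebra R (ZMod n))[X] →ₐ[R] QuotRing R n :=
  aevalTower (lift R (QuotRing R n) (ZMod n) (powZModHom _ (mk_X_zero_pow R n)))
    (Ideal.Quotient.mk _ (MvPolynomial.X 1))

theorem ofPolynomial_C_single_natCast (k : ℕ) :
    ofPolynomial R n (C (single (k : ZMod n) 1)) =
      Ideal.Quotient.mk _ (MvPolynomial.X 0) ^ k := by
  simp [ofPolynomial, powZModHom_ofAdd_natCast]

@[simp]
theorem ofPolynomial_X : ofPolynomial R n X = Ideal.Quotient.mk _ (MvPolynomial.X 1) := by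
  simp [ofPolynomial]

noncomputable def equivPolynomial : QuotRing R n ≃ₐ[R] (AddMonoidAlgebra R (ZMod n))[X] :=
  .ofAlgHom (toPolynomial R n) (ofPolynomial R n)
    (by
      refine Polynomial.algHom_ext' ?_ (by simp)
      refine AddMonoidAlgebra.algHom_ext (fun i => ?_) (Subsingleton.elim _ _)
      obtain ⟨k, rfl⟩ : ∃ k : ℕ, (k : ZMod n) = i := ⟨i.val, ZMod.natCast_zmod_val i⟩
      simp [ofPolynomial_C_single_natCast, ← C_pow, single_pow])
    (by
      refine Ideal.Quotient.algHom_ext _ (MvPolynomial.algHom_ext fun i => ?_)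
      fin_cases i
      · simpa using ofPolynomial_C_single_natCast R n 1
      · simp)

theorem equivPolynomial_mk_X_zero_pow_mul_f2 (i k : ℕ) :
    equivPolynomial ℤ n (Ideal.Quotient.mk _ (MvPolynomial.X 0 ^ i * f2 k)) =
      greenBasis ℤ n (i, k) := by
  simp [equivPolynomial, toPolynomial_mk_f2, greenBasis_apply, ← C_pow, single_pow]

end CyclicQuiver

open MvPolynomial Finset in
/-- A = ℤ[x,y]/⟨x^n - 1⟩ is a free ℤ-module; it is isomorphic to
the Green ring of the cyclic quiver (free abelian group on [V(i,l)],
i ∈ ℤ/n, l ∈ ℕ, with product [V(i,l)]·[V(j,m)] = Σ_{t=0}^{min(l,m)}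
[V(i+j+t, l+m-2t)]) via x ↦ [V(1,0)], y ↦ [V(0,1)], under which
x^i f_k(x,y) ↦ [V(i,k)].  We encode the Green ring as the free ℤ-module
(ZMod n × ℕ) →₀ ℤ with [V(i,l)] = single (i,l) 1, and record that the linear
isomorphism sends x^i f_k to [V(i,k)] and transports multiplication to the
Clebsch–Gordan rule. -/
theorem green_ring_cyclic_q_one (n : ℕ) (hn : 1 ≤ n) :
    ∃ e : (MvPolynomial (Fin 2) ℤ ⧸
            Ideal.span {(X 0 : MvPolynomial (Fin 2) ℤ) ^ n - 1}) ≃ₗ[ℤ]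
          ((ZMod n × ℕ) →₀ ℤ),
      (∀ (i k : ℕ),
        e (Ideal.Quotient.mk _ (X 0 ^ i * f2 k)) = Finsupp.single ((i : ZMod n), k) 1) ∧
      (∀ (i j : ZMod n) (l m : ℕ),
        e.symm (Finsupp.single (i, l) 1) * e.symm (Finsupp.single (j, m) 1) =
          e.symm (∑ t ∈ Finset.range (min l m + 1),
            Finsupp.single (i + j + (t : ZMod n), l + m - 2 * t) 1)) := by
  open CyclicQuiver in
  have : NeZero n := ⟨by omega⟩
  let e := (equivPolynomial ℤ n).toLinearEquiv ≪≫ₗ (greenBasis ℤ n).repr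
  have e_symm_single (c : ZMod n × ℕ) :
      e.symm (Finsupp.single c 1) = (equivPolynomial ℤ n).symm (greenBasis ℤ n c) := by
    simp [e]
  refine ⟨e, fun i k => ?_, fun i j l m => ?_⟩
  · rw [LinearEquiv.trans_apply, AlgEquiv.toLinearEquiv_apply,
      equivPolynomial_mk_X_zero_pow_mul_f2, Module.Basis.repr_self]
  · simp only [map_sum, e_symm_single, ← map_mul, greenBasis_mul]
end

section
/- Let R be the free abelian group with basis {[V(i,l)] : i ∈ ℤ, l ∈ ℕ} equipped with the commutative ring structure [V(i,l)]·[V(j,m)] = Σ_{t=0}^{min(l,m)} [V(i+j+t, l+m-2t)] and unit [V(0,0)]. Then R is isomorphic as a ring to ℤ[x, x^{-1}, y] via [V(1,0)] ↦ x, [V(-1,0)] ↦ x^{-1}, [V(0,1)] ↦ y, and under this isomorphism [V(i,k)] ↦ x^i f_k(x,y). -/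
open Polynomial Finset
open LaurentPolynomial (T T_add T_pow)

namespace Polynomial

structure IsFibonacciSequence {R : Type*} [CommRing R] (c : R) (p : ℕ → R[X]) : Prop where
  zero : p 0 = 1
  one : p 1 = X
  add_two : ∀ k, p (k + 2) = X * p (k + 1) - C c * p k

namespace IsFibonacciSequence

variable {R : Type*} [CommRing R] {c : R} {p : ℕ → R[X]}

theorem monic_and_natDegree [Nontrivial R] (hp : IsFibonacciSequence c p) (k : ℕ) :
    (p k).Monic ∧ (p k).natDegree = k := by
  induction k using Nat.twoStepInduction with
  | zero => exact hp.zero ▸ ⟨monic_one, natDegree_one⟩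
  | one => exact hp.one ▸ ⟨monic_X, natDegree_X⟩
  | more k ih₀ ih₁ =>
    have hlead : (X * p (k + 1)).Monic ∧ (X * p (k + 1)).natDegree = k + 2 := by
      refine ⟨monic_X.mul ih₁.1, ?_⟩
      rw [monic_X.natDegree_mul ih₁.1, natDegree_X, ih₁.2]
      omega
    have hlt : (C c * p k).natDegree < (X * p (k + 1)).natDegree :=
      (natDegree_C_mul_le c (p k)).trans_lt (by omega)
    rw [hp.add_two, natDegree_sub_eq_left_of_natDegree_lt hlt]
    exact ⟨hlead.1.sub_of_left (degree_lt_degree hlt), hlead.2⟩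

theorem monic [Nontrivial R] (hp : IsFibonacciSequence c p) (k : ℕ) : (p k).Monic :=
  (hp.monic_and_natDegree k).1

theorem natDegree_eq [Nontrivial R] (hp : IsFibonacciSequence c p) (k : ℕ) :
    (p k).natDegree = k :=
  (hp.monic_and_natDegree k).2

theorem mul_eq_sum' (hp : IsFibonacciSequence c p) :
    ∀ m d, p (m + d) * p m = ∑ t ∈ range (m + 1), C c ^ t * p (2 * m + d - 2 * t)
  | 0, d => by simp [hp.zero]
  | 1, d => by
    rw [hp.one, sum_range_succ, sum_range_one, show 2 * 1 + d - 2 * 0 = d + 2 by omega,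
      show 2 * 1 + d - 2 * 1 = d by omega, hp.add_two, add_comm 1 d]
    ring
  | m + 2, d => by
    have hX : X * p (m + 2 + d) = p (m + 1 + (d + 2)) + C c * p (m + 1 + d) := by
      rw [show m + 1 + (d + 2) = (m + 1 + d) + 2 by omega, hp.add_two,
        show m + 1 + d + 1 = m + 2 + d by omega]
      ring
    have hprod : p (m + 2 + d) * p (m + 2) = p (m + 1 + (d + 2)) * p (m + 1)
        + C c * (p (m + 1 + d) * p (m + 1)) - C c * (p (m + (d + 2)) * p m) := by
      rw [hp.add_two m, show m + (d + 2) = m + 2 + d by omega]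
      linear_combination p (m + 1) * hX
    have hS₁ : ∑ t ∈ range (m + 2), C c ^ t * p (2 * (m + 1) + (d + 2) - 2 * t)
        = ∑ t ∈ range (m + 2), C c ^ t * p (2 * (m + 2) + d - 2 * t) :=
      sum_congr rfl fun t _ => by rw [show 2 * (m + 1) + (d + 2) = 2 * (m + 2) + d by omega]
    have hS₂ : ∑ t ∈ range (m + 2), C c ^ t * p (2 * (m + 1) + d - 2 * t)
        = ∑ t ∈ range (m + 1), C c ^ t * p (2 * m + (d + 2) - 2 * t) + C c ^ (m + 1) * p d := by
      rw [sum_range_succ, show 2 * (m + 1) + d - 2 * (m + 1) = d by omega]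
      congr 1
      exact sum_congr rfl fun t _ => by rw [show 2 * (m + 1) + d = 2 * m + (d + 2) by omega]
    rw [hprod, mul_eq_sum' hp (m + 1) (d + 2), mul_eq_sum' hp (m + 1) d, mul_eq_sum' hp m (d + 2),
      hS₁, hS₂, sum_range_succ _ (m + 2), show 2 * (m + 2) + d - 2 * (m + 2) = d by omega]
    ring

theorem mul_eq_sum (hp : IsFibonacciSequence c p) (l m : ℕ) :
    p l * p m = ∑ t ∈ range (min l m + 1), C c ^ t * p (l + m - 2 * t) := by
  rcases le_total m l with h | h
  · obtain ⟨d, rfl⟩ := Nat.exists_eq_add_of_le h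
    rw [min_eq_right h, hp.mul_eq_sum' m d]
    exact sum_congr rfl fun t _ => by rw [show m + d + m = 2 * m + d by omega]
  · obtain ⟨d, rfl⟩ := Nat.exists_eq_add_of_le h
    rw [min_eq_left h, mul_comm, hp.mul_eq_sum' l d]
    exact sum_congr rfl fun t _ => by rw [show l + (l + d) = 2 * l + d by omega]

noncomputable def toSequence [Nontrivial R] (hp : IsFibonacciSequence c p) : Sequence R where
  elems' := p
  degree_eq' k := by rw [degree_eq_natDegree (hp.monic k).ne_zero, hp.natDegree_eq]

noncomputable def basis [IsDomain R] (hp : IsFibonacciSequence c p) : Module.Basis ℕ R R[X] :=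
  hp.toSequence.basis fun k => (hp.monic k).leadingCoeff ▸ isUnit_one

theorem basis_apply [IsDomain R] (hp : IsFibonacciSequence c p) (k : ℕ) : hp.basis k = p k :=
  Sequence.basis_eq_self _ _ k

end IsFibonacciSequence

end Polynomial

theorem isFibonacciSequence_f2L : IsFibonacciSequence (T 1) f2L where
  zero := by simp [f2L, f2]
  one := by simp [f2L, f2]
  add_two k := by simp [f2L, f2]

noncomputable def greenBasis : Module.Basis (ℤ × ℕ) ℤ LPoly :=
  (AddMonoidAlgebra.basis ℤ ℤ).smulTower isFibonacciSequence_f2L.basis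

theorem greenBasis_apply (i : ℤ) (k : ℕ) : greenBasis (i, k) = C (T i) * f2L k := by
  rw [greenBasis, Module.Basis.smulTower_apply, IsFibonacciSequence.basis_apply, smul_eq_C_mul]
  rfl

open Finset in
/-- the Green ring of the infinite linear quiver (free abelian
group on [V(i,l)], i ∈ ℤ, l ∈ ℕ, with product
[V(i,l)]·[V(j,m)] = Σ_{t=0}^{min(l,m)} [V(i+j+t, l+m-2t)], unit [V(0,0)])
is isomorphic to ℤ[x,x⁻¹,y] via [V(1,0)] ↦ x, [V(-1,0)] ↦ x⁻¹,
[V(0,1)] ↦ y, and [V(i,k)] ↦ x^i f_k(x,y).  We encode the Green ring as the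
free ℤ-module (ℤ × ℕ) →₀ ℤ with [V(i,l)] = single (i,l) 1 and record that the
linear isomorphism sends [V(i,k)] to x^i f_k and transports the Clebsch–Gordan
multiplication to the ring multiplication of ℤ[x,x⁻¹,y]. -/
theorem green_ring_infinite_linear_q_one :
    ∃ e : ((ℤ × ℕ) →₀ ℤ) ≃ₗ[ℤ] LPoly,
      (∀ (i : ℤ) (k : ℕ),
        e (Finsupp.single (i, k) 1) =
          Polynomial.C (LaurentPolynomial.T (R := ℤ) i) * f2L k) ∧
      (∀ (i j : ℤ) (l m : ℕ),
        e (Finsupp.single (i, l) 1) * e (Finsupp.single (j, m) 1) =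
          e (∑ t ∈ Finset.range (min l m + 1),
            Finsupp.single (i + j + (t : ℤ), l + m - 2 * t) 1)) := by
  have he : ∀ (i : ℤ) (k : ℕ), greenBasis.repr.symm (Finsupp.single (i, k) 1) = C (T i) * f2L k :=
    fun i k => by rw [Module.Basis.repr_symm_single_one, greenBasis_apply]
  refine ⟨greenBasis.repr.symm, he, fun i j l m => ?_⟩
  have hT : ∀ t : ℕ, C (T (i + j + t)) = C (T i) * C (T j) * C (T (R := ℤ) 1) ^ t := fun t => by
    rw [← map_pow, T_pow, mul_one, T_add, T_add, map_mul, map_mul]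
  simp only [map_sum, he, hT]
  calc C (T i) * f2L l * (C (T j) * f2L m) = C (T i) * C (T j) * (f2L l * f2L m) := by ring
    _ = _ := by rw [isFibonacciSequence_f2L.mul_eq_sum, mul_sum]; simp only [mul_assoc]
end

section
/- In the commutative ring R with ℤ-basis {[V(i,l)] : i ∈ ℤ/n, l ∈ ℕ} and product [V(i,l)]·[V(j,m)] = Σ_{t=0}^{min(l,m)} [V(i+j+t, l+m-2t)], the identity [V(0,l)]·[V(0,m)] = Σ_{t=0}^{min(l,m)} [V(t, l+m-2t)] follows by induction from the two relations [V(1,0)]·[V(i,l)] = [V(i+1,l)] and [V(0,1)]·[V(0,l)] = [V(0,l+1)] + [V(1,l-1)]; formally: if a commutative ring S contains elements g and v_{i,l} (i ∈ ℤ/n, l ∈ ℕ) satisfying v_{0,0} = 1, g·v_{i,l} = v_{i+1,l}, v_{i,l} = g^i · v_{0,l}, and v_{0,1}·v_{0,l} = v_{0,l+1} + v_{1,l-1} for all l ≥ 1, then v_{0,l}·v_{0,m} = Σ_{t=0}^{min(l,m)} v_{t, l+m-2t} for all l, m ≥ 0. -/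
open Finset in
/-- in a commutative ring S with elements g and v_{i,l}
(i ∈ ℤ/n, l ∈ ℕ) satisfying v_{0,0} = 1, g = v_{1,0}, g·v_{i,l} = v_{i+1,l},
v_{i,l} = g^i·v_{0,l}, and v_{0,1}·v_{0,l} = v_{0,l+1} + v_{1,l-1} for l ≥ 1,
one has v_{0,l}·v_{0,m} = Σ_{t=0}^{min(l,m)} v_{t, l+m-2t}. -/
theorem clebsch_gordan_cyclic_q_one (n : ℕ) (hn : 1 ≤ n)
    {S : Type*} [CommRing S] (v : ZMod n → ℕ → S) (g : S)
    (hg : g = v 1 0)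
    (h00 : v 0 0 = 1)
    (hshift : ∀ (i : ZMod n) (l : ℕ), g * v i l = v (i + 1) l)
    (hpow : ∀ (i : ZMod n) (l : ℕ), v i l = g ^ i.val * v 0 l)
    (hrec : ∀ l : ℕ, 1 ≤ l → v 0 1 * v 0 l = v 0 (l + 1) + v 1 (l - 1)) :
    ∀ l m : ℕ, v 0 l * v 0 m =
      ∑ t ∈ Finset.range (min l m + 1), v (t : ZMod n) (l + m - 2 * t) := by
  have h01 : ∀ l : ℕ, g * v 0 l = v 1 l := by
    intro l; simpa using hshift 0 l
  have key : ∀ (t : ZMod n) (k : ℕ), 1 ≤ k →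
      v 0 1 * v t k = v t (k + 1) + v (t + 1) (k - 1) := by
    intro t k hk
    calc v 0 1 * v t k = g ^ t.val * (v 0 1 * v 0 k) := by rw [hpow t k]; ring
      _ = g ^ t.val * (v 0 (k + 1) + v 1 (k - 1)) := by rw [hrec k hk]
      _ = g ^ t.val * v 0 (k + 1) + g ^ t.val * (g * v 0 (k - 1)) := by
          rw [h01 (k - 1)]; ring
      _ = v t (k + 1) + g * v t (k - 1) := by
          rw [hpow t (k + 1), hpow t (k - 1)]; ring
      _ = v t (k + 1) + v (t + 1) (k - 1) := by rw [hshift t (k - 1)]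
  have aux : ∀ l m : ℕ, l ≤ m → v 0 l * v 0 m =
      ∑ t ∈ Finset.range (l + 1), v (t : ZMod n) (l + m - 2 * t) := by
    intro l
    induction l using Nat.twoStepInduction with
    | zero =>
      intro m _
      simp [h00]
    | one =>
      intro m hm
      have e1 : 1 + m - 2 * 0 = m + 1 := by omega
      have e2 : 1 + m - 2 * 1 = m - 1 := by omega
      rw [hrec m hm, Finset.sum_range_succ, Finset.sum_range_one, e1, e2]
      norm_num
    | more l ih ih1 =>
      intro m hm
      have hv2 : v 0 (l + 2) = v 0 1 * v 0 (l + 1) - v 1 l := by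
        have h := hrec (l + 1) (by omega)
        simp only [Nat.add_sub_cancel] at h
        rw [h]; ring
      calc v 0 (l + 2) * v 0 m
          = v 0 1 * (v 0 (l + 1) * v 0 m) - g * (v 0 l * v 0 m) := by
            rw [hv2, ← h01 l]; ring
        _ = v 0 1 * (∑ t ∈ Finset.range (l + 2), v (t : ZMod n) (l + 1 + m - 2 * t))
            - g * ∑ t ∈ Finset.range (l + 1), v (t : ZMod n) (l + m - 2 * t) := by
            rw [ih1 m (by omega), ih m (by omega)]
        _ = (∑ t ∈ Finset.range (l + 2),
              (v (t : ZMod n) (l + 2 + m - 2 * t) + v ((t : ZMod n) + 1) (l + m - 2 * t)))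
            - ∑ t ∈ Finset.range (l + 1), v ((t : ZMod n) + 1) (l + m - 2 * t) := by
            rw [Finset.mul_sum, Finset.mul_sum]
            congr 1
            · apply Finset.sum_congr rfl
              intro t ht
              have ht' : t < l + 2 := Finset.mem_range.mp ht
              have hk : 1 ≤ l + 1 + m - 2 * t := by omega
              have e1 : l + 1 + m - 2 * t + 1 = l + 2 + m - 2 * t := by omega
              have e2 : l + 1 + m - 2 * t - 1 = l + m - 2 * t := by omega
              rw [key (t : ZMod n) (l + 1 + m - 2 * t) hk, e1, e2]
            · exact Finset.sum_congr rfl fun t _ => hshift _ _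
        _ = ∑ t ∈ Finset.range (l + 3), v (t : ZMod n) (l + 2 + m - 2 * t) := by
            rw [Finset.sum_add_distrib,
              Finset.sum_range_succ (fun t : ℕ => v ((t : ZMod n) + 1) (l + m - 2 * t)) (l + 1),
              Finset.sum_range_succ (fun t : ℕ => v (t : ZMod n) (l + 2 + m - 2 * t)) (l + 2)]
            have e1 : l + m - 2 * (l + 1) = l + 2 + m - 2 * (l + 2) := by omega
            have e2 : ((l + 1 : ℕ) : ZMod n) + 1 = ((l + 2 : ℕ) : ZMod n) := by push_cast; ring
            rw [e1, e2]; ring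
  intro l m
  rcases le_total l m with h | h
  · rw [Nat.min_eq_left h]; exact aux l m h
  · rw [Nat.min_eq_right h, mul_comm, aux m l h]
    exact Finset.sum_congr rfl fun t _ => by rw [Nat.add_comm m l]
end
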